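/- Let p be an odd prime and n a positive integer. In the ring ℤ_p of p-adic integers, the ideal generated by (1+p)^n - 1 equals the ideal generated by p·n. In particular ℤ_p/((1+p)^n - 1) ≅ ℤ_p/(p·n) as rings. -/

import Mathlib

lemma aux_assoc (p : ℕ) [hp : Fact p.Prime] {a b : ℤ} (ha : a ≠ 0) (hb : b ≠ 0)
    (h : emultiplicity (p : ℤ) a = emultiplicity (p : ℤ) b) :
    Associated ((a : ℤ_[p])) ((b : ℤ_[p])) := by
  have hne1 : (p : ℤ).natAbs ≠ 1 := by simpa using hp.out.ne_one
  have hfa : FiniteMultiplicity (p : ℤ) a := Int.finiteMultiplicity_iff.mpr ⟨hne1, ha⟩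
  have hfb : FiniteMultiplicity (p : ℤ) b := Int.finiteMultiplicity_iff.mpr ⟨hne1, hb⟩
  obtain ⟨u, hu, hu'⟩ := hfa.exists_eq_pow_mul_and_not_dvd
  obtain ⟨v, hv, hv'⟩ := hfb.exists_eq_pow_mul_and_not_dvd
  have hk : multiplicity (p : ℤ) a = multiplicity (p : ℤ) b := by
    have h2 := hfa.emultiplicity_eq_multiplicity
    rw [h, hfb.emultiplicity_eq_multiplicity] at h2
    exact_mod_cast h2.symm
  have unit_of_not_dvd : ∀ w : ℤ, ¬ (p : ℤ) ∣ w → IsUnit ((w : ℤ_[p])) := by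
    intro w hw
    refine PadicInt.isUnit_iff.mpr (le_antisymm (PadicInt.norm_le_one _) (not_lt.mp ?_))
    exact fun hlt => hw ((PadicInt.norm_int_lt_one_iff_dvd w).mp hlt)
  have hU := unit_of_not_dvd u hu'
  have hV := unit_of_not_dvd v hv'
  have h1 : Associated ((p : ℤ_[p]) ^ multiplicity (p : ℤ) a) (a : ℤ_[p]) := by
    refine ⟨hU.unit, ?_⟩
    rw [IsUnit.unit_spec]
    conv_rhs => rw [hu]
    push_cast; ring
  have h2 : Associated ((p : ℤ_[p]) ^ multiplicity (p : ℤ) b) (b : ℤ_[p]) := by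
    refine ⟨hV.unit, ?_⟩
    rw [IsUnit.unit_spec]
    conv_rhs => rw [hv]
    push_cast; ring
  rw [hk] at h1
  exact h1.symm.trans h2

theorem stmt2 (p : ℕ) [Fact p.Prime] (hodd : Odd p) (n : ℕ) (hn : 1 ≤ n) :
    Ideal.span {((1 + (p : ℤ_[p])) ^ n - 1)} = Ideal.span {((p : ℤ_[p]) * (n : ℤ_[p]))} ∧
      Nonempty ((ℤ_[p] ⧸ Ideal.span {((1 + (p : ℤ_[p])) ^ n - 1)}) ≃+*
        (ℤ_[p] ⧸ Ideal.span {((p : ℤ_[p]) * (n : ℤ_[p]))})) := by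
  have hp := Fact.out (p := p.Prime)
  have hpp : Prime (p : ℤ) := Nat.prime_iff_prime_int.mp hp
  have hppos : 0 < p := hp.pos
  -- LTE
  have hxy : (p : ℤ) ∣ (1 + p) - 1 := by simp
  have hx : ¬ (p : ℤ) ∣ (1 + p) := by
    intro hd
    have : (p : ℤ) ∣ 1 := (dvd_sub_right hd).mp (by simpa using hxy)
    exact hpp.not_unit (isUnit_of_dvd_one this)
  have lte := Int.emultiplicity_pow_sub_pow hp hodd hxy hx n
  have hmul : emultiplicity (p : ℤ) ((1 + p : ℤ) ^ n - 1 ^ n)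
      = emultiplicity (p : ℤ) ((p : ℤ) * (n : ℤ)) := by
    rw [lte, emultiplicity_mul hpp]
    congr 1
    · simpa using (FiniteMultiplicity.emultiplicity_self
        (Int.finiteMultiplicity_iff.mpr ⟨by simpa using hp.ne_one, by exact_mod_cast hp.pos.ne'⟩))
    · exact (Int.natCast_emultiplicity p n).symm
  have ha : ((1 + p : ℤ) ^ n - 1 : ℤ) ≠ 0 := by
    have : (1 : ℤ) < (1 + p) ^ n := by
      calc (1:ℤ) < 1 + p := by omega
      _ ≤ (1 + p) ^ n := le_self_pow₀ (by omega) (by omega)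
    omega
  have hb : ((p : ℤ) * (n : ℤ)) ≠ 0 :=
    mul_ne_zero (by exact_mod_cast hppos.ne') (by exact_mod_cast (by omega : n ≠ 0))
  have hmul' : emultiplicity (p : ℤ) ((1 + p : ℤ) ^ n - 1)
      = emultiplicity (p : ℤ) ((p : ℤ) * (n : ℤ)) := by simpa using hmul
  have hassoc := aux_assoc p ha hb hmul'
  have e1 : ((((1 + p : ℤ) ^ n - 1 : ℤ)) : ℤ_[p]) = (1 + (p : ℤ_[p])) ^ n - 1 := by
    push_cast; ring
  have e2 : ((((p : ℤ) * (n : ℤ)) : ℤ) : ℤ_[p]) = (p : ℤ_[p]) * (n : ℤ_[p]) := by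
    push_cast; ring
  rw [e1, e2] at hassoc
  have hspan := Ideal.span_singleton_eq_span_singleton.mpr hassoc
  exact ⟨hspan, ⟨hspan ▸ RingEquiv.refl _⟩⟩
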